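/- For a Hom-Lie-Yamaguti algebra (L, [·,·], {·,·,·}, α), the space Der(L) = ⊕_{k≥0} Der_{α^k}(L) of all α^k-derivations (k ≥ 0) is closed under the commutator bracket [D, D'] = D∘D' − D'∘D and forms a Lie algebra. -/

import Mathlib

/-- A Hom-Lie-Yamaguti algebra over a field `K`. -/
structure HLY (K L : Type*) [Field K] [AddCommGroup L] [Module K L] where
  br : L →ₗ[K] L →ₗ[K] L
  tr : L →ₗ[K] L →ₗ[K] L →ₗ[K] L
  a : L →ₗ[K] L
  a_br : ∀ x y, a (br x y) = br (a x) (a y)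
  a_tr : ∀ x y z, a (tr x y z) = tr (a x) (a y) (a z)
  br_alt : ∀ x, br x x = 0
  tr_alt : ∀ x y, tr x x y = 0
  ax5 : ∀ x y z,
    (br (br x y) (a z) + tr x y z) + (br (br y z) (a x) + tr y z x) +
      (br (br z x) (a y) + tr z x y) = 0
  ax6 : ∀ x y z u,
    tr (br x y) (a z) (a u) + tr (br y z) (a x) (a u) + tr (br z x) (a y) (a u) = 0
  ax7 : ∀ x y u v,
    tr (a x) (a y) (br u v) = br (tr x y u) (a (a v)) + br (a (a u)) (tr x y v)
  ax8 : ∀ u v x y z,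
    tr (a (a u)) (a (a v)) (tr x y z) =
      tr (tr u v x) (a (a y)) (a (a z)) + tr (a (a x)) (tr u v y) (a (a z)) +
        tr (a (a x)) (a (a y)) (tr u v z)

variable {K L : Type*} [Field K] [AddCommGroup L] [Module K L]

/-- `D` is an `α^k`-derivation of the Hom-Lie-Yamaguti algebra `H`. -/
def IsDer (H : HLY K L) (k : ℕ) (D : Module.End K L) : Prop :=
  (∀ x, D (H.a x) = H.a (D x)) ∧
  (∀ x y, D (H.br x y) = H.br ((H.a ^ k) x) (D y) + H.br (D x) ((H.a ^ k) y)) ∧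
  (∀ x y z, D (H.tr x y z) =
    H.tr (D x) ((H.a ^ k) y) ((H.a ^ k) z) + H.tr ((H.a ^ k) x) (D y) ((H.a ^ k) z) +
      H.tr ((H.a ^ k) x) ((H.a ^ k) y) (D z))

/-!
An `α^k`-derivation commutes with `α`, hence with every power of `α`; expanding
`⁅D, D'⁆ = D D' - D' D` on brackets and triple products then shows that the commutator of an
`α^k`-derivation and an `α^l`-derivation is an `α^(k+l)`-derivation. Bilinearity of the
commutator extends this from the derivations to their span.
-/

theorem Submodule.lie_mem_span_of_forall_lie_mem {R A : Type*} [CommRing R] [Ring A]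
    [Algebra R A] {s : Set A} (hs : ∀ x ∈ s, ∀ y ∈ s, ⁅x, y⁆ ∈ Submodule.span R s)
    {x y : A} (hx : x ∈ Submodule.span R s) (hy : y ∈ Submodule.span R s) :
    ⁅x, y⁆ ∈ Submodule.span R s := by
  let bracket : A →ₗ[R] A →ₗ[R] A := LinearMap.mul R A - (LinearMap.mul R A).flip
  have bracket_apply : ∀ x y, bracket x y = ⁅x, y⁆ := fun x y => by
    simp [bracket, Ring.lie_def]
  have hle : Submodule.map₂ bracket (Submodule.span R s) (Submodule.span R s) ≤
      Submodule.span R s := by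
    rw [Submodule.map₂_span_span, Submodule.span_le]
    rintro _ ⟨x, hx, y, hy, rfl⟩
    simpa only [bracket_apply, SetLike.mem_coe] using hs x hx y hy
  simpa only [bracket_apply] using hle (Submodule.apply_mem_map₂ bracket hx hy)

namespace IsDer

variable {H : HLY K L} {k l : ℕ} {D D' : Module.End K L}

theorem map_pow_apply (hD : IsDer H k D) (n : ℕ) (x : L) :
    D ((H.a ^ n) x) = (H.a ^ n) (D x) :=
  LinearMap.congr_fun ((Commute.pow_right (LinearMap.ext hD.1 : Commute D H.a)) n) x

theorem lie (hD : IsDer H k D) (hD' : IsDer H l D') : IsDer H (k + l) ⁅D, D'⁆ := by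
  have pow_add_apply : ∀ x, (H.a ^ (k + l)) x = (H.a ^ k) ((H.a ^ l) x) := fun x => by
    rw [pow_add, Module.End.mul_apply]
  have pow_comm_apply : ∀ x, (H.a ^ l) ((H.a ^ k) x) = (H.a ^ k) ((H.a ^ l) x) := fun x => by
    rw [← Module.End.mul_apply, pow_mul_comm, Module.End.mul_apply]
  refine ⟨fun x => ?_, fun x y => ?_, fun x y z => ?_⟩
  · simp only [Ring.lie_def, LinearMap.sub_apply, Module.End.mul_apply, hD.1, hD'.1, map_sub]
  · simp only [Ring.lie_def, LinearMap.sub_apply, Module.End.mul_apply, hD.2.1, hD'.2.1,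
      map_add, map_sub, hD.map_pow_apply, hD'.map_pow_apply, pow_add_apply, pow_comm_apply]
    abel
  · simp only [Ring.lie_def, LinearMap.sub_apply, Module.End.mul_apply, hD.2.2, hD'.2.2,
      map_add, map_sub, hD.map_pow_apply, hD'.map_pow_apply, pow_add_apply, pow_comm_apply]
    abel

end IsDer

/-- `Der(L) = ⊕_{k ≥ 0} Der_{α^k}(L)` (the span of all `α^k`-derivations inside
`End(L)`) is closed under the commutator bracket, hence is a Lie subalgebra of
the endomorphism Lie algebra. -/
theorem der_closed_under_bracket (H : HLY K L)
    (D D' : Module.End K L)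
    (hD : D ∈ Submodule.span K {E : Module.End K L | ∃ k : ℕ, IsDer H k E})
    (hD' : D' ∈ Submodule.span K {E : Module.End K L | ∃ k : ℕ, IsDer H k E}) :
    D * D' - D' * D ∈ Submodule.span K {E : Module.End K L | ∃ k : ℕ, IsDer H k E} := by
  rw [← Ring.lie_def]
  refine Submodule.lie_mem_span_of_forall_lie_mem ?_ hD hD'
  rintro E ⟨k, hE⟩ E' ⟨l, hE'⟩
  exact Submodule.subset_span ⟨k + l, hE.lie hE'⟩
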